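/- Let G be a locally compact group with center Z, let ω : Z → ℂ^× be a character, and let ψ : G → ℂ satisfy ψ(zg) = ω(z)ψ(g) for all z ∈ Z, g ∈ G. Suppose G' = supp(ψ) is a subgroup, C₀ ⊆ G' is a closed subgroup, and {t} is a set of coset representatives for G'/(C₀Z). Put C = ⋃_t C₀ t and f = ψ·1_C. Then for all g ∈ G, ∫_Z ω(z)^{-1} f(zg) dz = ψ(g) · vol_Z(C₀ ∩ Z). -/

import Mathlib

/-!
For `z` central, `ω(z)⁻¹ f(zg)` equals `ψ(g)` when `zg ∈ C` and `0` otherwise, so the integral is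
`ψ(g)` times the measure of `{z | zg ∈ C}`. This vanishes trivially off `supp ψ`. For `g ∈ G'`, write
`g = c z₀ t`; since `zg = (cz) z₀ t` and the representative `t` is unique, `zg ∈ C` exactly when
`z₀ z ∈ C₀`, so the set is a translate of `C₀ ∩ Z` and has the same Haar measure.
-/

open MeasureTheory

namespace Subgroup

variable {G : Type*} [Group G]

lemma mul_mem_iUnion_image_mul_right_iff {C₀ : Subgroup G} {T : Set G} {g c z₀ t : G}
    (hc : c ∈ C₀) (hg : g = c * z₀ * t) (ht : t ∈ T)
    (huniq : ∀ t' ∈ T, (∃ c' ∈ (C₀ : Set G), ∃ z ∈ center G, g = c' * z * t') → t' = t)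
    {z : G} (hz : z ∈ center G) :
    z * g ∈ ⋃ t ∈ T, (· * t) '' (C₀ : Set G) ↔ z₀ * z ∈ C₀ := by
  have hzc (x : G) : z * x = x * z := ((mem_center_iff.mp hz) x).symm
  simp only [Set.mem_iUnion, Set.mem_image, exists_prop]
  constructor
  · rintro ⟨t', ht', c', hc', hzg⟩
    have hg' : g = c' * z⁻¹ * t' :=
      calc g = z⁻¹ * (c' * t') := by rw [hzg]; group
        _ = c' * z⁻¹ * t' := by rw [← mul_assoc, (mem_center_iff.mp (inv_mem hz) c').symm]
    obtain rfl := huniq t' ht' ⟨c', hc', z⁻¹, inv_mem hz, hg'⟩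
    have hzz₀ : z₀ * z = c⁻¹ * c' :=
      calc z₀ * z = c⁻¹ * (z * (c * z₀)) := by rw [hzc (c * z₀)]; group
        _ = c⁻¹ * (z * g * t'⁻¹) := by rw [hg]; group
        _ = c⁻¹ * c' := by rw [← hzg]; group
    exact hzz₀ ▸ C₀.mul_mem (C₀.inv_mem hc) hc'
  · intro hmem
    refine ⟨t, ht, c * (z₀ * z), C₀.mul_mem hc hmem, ?_⟩
    calc c * (z₀ * z) * t = z * (c * z₀) * t := by rw [hzc (c * z₀)]; group
      _ = z * g := by rw [hg]; group

end Subgroup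

lemma inv_mul_indicator_mul_eq_indicator {G 𝕜 : Type*} [Group G] [Field 𝕜] {Z : Subgroup G}
    (ω : Z →* 𝕜ˣ) {ψ : G → 𝕜} (hψ : ∀ (z : Z) (g : G), ψ (z * g) = ω z * ψ g)
    (C : Set G) (g : G) (z : Z) :
    (ω z : 𝕜)⁻¹ * C.indicator ψ (z * g) = {z : Z | (z : G) * g ∈ C}.indicator (fun _ ↦ ψ g) z := by
  by_cases hz : (z : G) * g ∈ C
  · have hz' : z ∈ {z : Z | (z : G) * g ∈ C} := hz
    rw [Set.indicator_of_mem hz, Set.indicator_of_mem hz', hψ,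
      inv_mul_cancel_left₀ (ω z).ne_zero]
  · have hz' : z ∉ {z : Z | (z : G) * g ∈ C} := hz
    rw [Set.indicator_of_notMem hz, Set.indicator_of_notMem hz', mul_zero]

theorem stmt7_general {G : Type*} [Group G] [TopologicalSpace G] [IsTopologicalGroup G]
    [MeasurableSpace G] [BorelSpace G]
    (μ : Measure (Subgroup.center G)) [μ.IsHaarMeasure]
    (ω : Subgroup.center G →* ℂˣ)
    (ψ : G → ℂ)
    (hψ : ∀ (z : Subgroup.center G) (g : G), ψ ((z : G) * g) = (ω z : ℂ) * ψ g)
    (G' : Subgroup G) (hG' : (G' : Set G) = Function.support ψ)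
    (C₀ : Subgroup G) (hC₀closed : IsClosed (C₀ : Set G))
    (T : Set G)
    (hrep : ∀ g ∈ (G' : Set G), ∃! t, t ∈ T ∧
      ∃ c ∈ (C₀ : Set G), ∃ z ∈ Subgroup.center G, g = c * z * t)
    (C : Set G) (hC : C = ⋃ t ∈ T, (fun c => c * t) '' (C₀ : Set G))
    (f : G → ℂ) (hf : f = Set.indicator C ψ)
    (g : G) :
    ∫ z : Subgroup.center G, ((ω z : ℂ))⁻¹ * f ((z : G) * g) ∂μ
      = ψ g * ((μ {z : Subgroup.center G | (z : G) ∈ C₀}).toReal : ℂ) := by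
  subst hf
  simp_rw [inv_mul_indicator_mul_eq_indicator ω hψ]
  by_cases hg : ψ g = 0
  · simp [hg]
  obtain ⟨t, ⟨htT, c, hc, z₀, hz₀, hgdec⟩, huniq⟩ := hrep g (hG' ▸ hg)
  have hC₀meas : MeasurableSet {z : Subgroup.center G | (z : G) ∈ C₀} :=
    measurable_subtype_coe hC₀closed.measurableSet
  have htranslate : {z : Subgroup.center G | (z : G) * g ∈ C} =
      ((⟨z₀, hz₀⟩ : Subgroup.center G) * ·) ⁻¹' {z | (z : G) ∈ C₀} := by
    subst hC
    ext z
    exact Subgroup.mul_mem_iUnion_image_mul_right_iff hc hgdec htT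
      (fun t' ht' h ↦ huniq t' ⟨ht', h⟩) z.2
  rw [htranslate, integral_indicator_const _ (measurable_const_mul _ hC₀meas), measureReal_def,
    measure_preimage_mul, Complex.real_smul, mul_comm]

/-- if `ψ(zg) = ω(z)ψ(g)`, `G' = supp ψ` is a subgroup, `C₀ ⊆ G'` is a closed
subgroup, `{t}` is a set of coset representatives for `G'/(C₀Z)`, `C = ⋃_t C₀t` and
`f = ψ·1_C`, then `∫_Z ω(z)⁻¹ f(zg) dz = ψ(g) · vol_Z(C₀ ∩ Z)`. -/
theorem stmt7 {G : Type*} [Group G] [TopologicalSpace G] [IsTopologicalGroup G]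
    [LocallyCompactSpace G] [MeasurableSpace G] [BorelSpace G]
    (μ : Measure (Subgroup.center G)) [μ.IsHaarMeasure]
    (ω : Subgroup.center G →* ℂˣ)
    (ψ : G → ℂ)
    (hψ : ∀ (z : Subgroup.center G) (g : G), ψ ((z : G) * g) = (ω z : ℂ) * ψ g)
    (G' : Subgroup G) (hG' : (G' : Set G) = Function.support ψ)
    (C₀ : Subgroup G) (hC₀G' : C₀ ≤ G') (hC₀closed : IsClosed (C₀ : Set G))
    (T : Set G) (hTG' : T ⊆ (G' : Set G))
    (hrep : ∀ g ∈ (G' : Set G), ∃! t, t ∈ T ∧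
      ∃ c ∈ (C₀ : Set G), ∃ z ∈ Subgroup.center G, g = c * z * t)
    (C : Set G) (hC : C = ⋃ t ∈ T, (fun c => c * t) '' (C₀ : Set G))
    (f : G → ℂ) (hf : f = Set.indicator C ψ)
    (g : G) :
    ∫ z : Subgroup.center G, ((ω z : ℂ))⁻¹ * f ((z : G) * g) ∂μ
      = ψ g * ((μ {z : Subgroup.center G | (z : G) ∈ C₀}).toReal : ℂ) :=
  stmt7_general μ ω ψ hψ G' hG' C₀ hC₀closed T hrep C hC f hf g
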